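/- Let γ : [0,1] → ℂ be continuously differentiable with image disjoint from (−∞,0], and let D : ℂ → ℂ be continuous. Define F : T → ℂ by F(z) := ∫₀¹ D(γ(t)) · γ′(t) · W_{γ(t)}(z) dt. Then for every z ∈ T the inner integral defining W_{γ(t)}(z) is absolutely convergent for each t ∈ [0,1], the outer integrand is integrable on [0,1], and F is holomorphic on T (ℂ-differentiable as a function of the four complex variables at every point of the open set T). -/

import Mathlib

open MeasureTheory Complex

/-- Principal branch of `√(‖k‖² + ζ)` for `k ∈ ℝ³`. -/
noncomputable def Esqrt (ζ : ℂ) (k : EuclideanSpace ℝ (Fin 3)) : ℂ :=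
  ((‖k‖ ^ 2 : ℝ) + ζ) ^ ((1 : ℂ) / 2)

/-- The forward tube `T = {z ∈ ℂ⁴ : −Im z₀ > √((Im z₁)² + (Im z₂)² + (Im z₃)²)}`. -/
def ForwardTube : Set (Fin 4 → ℂ) :=
  {z | Real.sqrt ((z 1).im ^ 2 + (z 2).im ^ 2 + (z 3).im ^ 2) < -(z 0).im}

/-- The integrand of the holomorphic Wightman function `W_ζ` of a simple pole. -/
noncomputable def WIntegrand (ζ : ℂ) (z : Fin 4 → ℂ) (k : EuclideanSpace ℝ (Fin 3)) : ℂ :=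
  (2 * Esqrt ζ k)⁻¹ *
    Complex.exp (-Complex.I * Esqrt ζ k * z 0 +
      Complex.I * ((k 0 : ℂ) * z 1 + (k 1 : ℂ) * z 2 + (k 2 : ℂ) * z 3))

/-- The holomorphic Wightman function `W_ζ(z)` of a simple (possibly complex-mass) pole. -/
noncomputable def Wpole (ζ : ℂ) (z : Fin 4 → ℂ) : ℂ :=
  ((2 * Real.pi : ℝ) : ℂ)⁻¹ ^ 3 * ∫ k : EuclideanSpace ℝ (Fin 3), WIntegrand ζ z k

/-!
Write `E = Esqrt ζ k`. Since `Re E ≥ 0`, we have `‖E - ‖k‖‖ ≤ ‖E + ‖k‖‖`, and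
`(E - ‖k‖)(E + ‖k‖) = ζ` gives `‖E - ‖k‖‖ ≤ √‖ζ‖`: the energy is the free one up to a bounded
error. Hence the exponent of the integrand has real part at most `√‖ζ‖ ‖z₀‖ - m(z) ‖k‖`, where
`m(z) = -Im z₀ - |Im z⃗|` is positive exactly on the forward tube, while `‖E‖² = ‖‖k‖² + ζ‖`
stays away from `0` uniformly for `ζ` in the compact set `γ([0,1]) ⊆ ℂ ∖ (-∞, 0]`. So the
integrand on `[0,1] × ℝ³` and its `z`-derivative are dominated, locally uniformly in `z`, by
`C (1 + ‖k‖) e^{-b‖k‖}`; this gives absolute convergence, Fubini, and holomorphy by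
differentiation under the integral sign.
-/

open Metric Set Filter Topology

lemma Complex.norm_sub_ofReal_sq_le {w : ℂ} (hw : 0 ≤ w.re) {r : ℝ} (hr : 0 ≤ r) :
    ‖w - r‖ ^ 2 ≤ ‖w ^ 2 - (r : ℂ) ^ 2‖ := by
  have hsq : ‖w - r‖ ^ 2 ≤ ‖w + r‖ ^ 2 := by
    simp only [Complex.sq_norm, Complex.normSq_apply, Complex.add_re, Complex.sub_re,
      Complex.add_im, Complex.sub_im, Complex.ofReal_re, Complex.ofReal_im]
    nlinarith
  have hle : ‖w - r‖ ≤ ‖w + r‖ :=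
    (pow_le_pow_iff_left₀ (norm_nonneg _) (norm_nonneg _) two_ne_zero).1 hsq
  calc ‖w - r‖ ^ 2 ≤ ‖w - r‖ * ‖w + r‖ := by rw [sq]; gcongr
    _ = ‖w ^ 2 - (r : ℂ) ^ 2‖ := by rw [← norm_mul]; ring_nf

lemma Complex.ofReal_add_mem_slitPlane {ζ : ℂ} (hζ : ζ ∈ slitPlane) {r : ℝ} (hr : 0 ≤ r) :
    (r : ℂ) + ζ ∈ slitPlane := by
  rw [Complex.mem_slitPlane_iff] at hζ ⊢
  simp only [Complex.add_re, Complex.ofReal_re, Complex.add_im, Complex.ofReal_im, zero_add]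
  rcases hζ with h | h
  · exact Or.inl (by linarith)
  · exact Or.inr h

lemma Complex.mem_slitPlane_of_forall_ne_ofReal {ζ : ℂ} (h : ∀ x : ℝ, x ≤ 0 → ζ ≠ x) :
    ζ ∈ slitPlane := by
  rw [Complex.mem_slitPlane_iff, or_iff_not_imp_right, not_not]
  intro him
  by_contra hre
  exact h ζ.re (not_lt.1 hre) (Complex.ext rfl (by simpa using him))

lemma IsCompact.exists_pos_le_norm_ofReal_add {K : Set ℂ} (hK : IsCompact K)
    (hKs : K ⊆ slitPlane) : ∃ δ > 0, ∀ ζ ∈ K, ∀ r : ℝ, 0 ≤ r → δ ≤ ‖(r : ℂ) + ζ‖ := by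
  obtain ⟨δ, hδ, hsub⟩ := hK.exists_thickening_subset_open Complex.isOpen_slitPlane hKs
  refine ⟨δ, hδ, fun ζ hζ r hr => not_lt.1 fun hlt => ?_⟩
  have hmem : -(r : ℂ) ∈ slitPlane :=
    hsub <| mem_thickening_iff.2
      ⟨ζ, hζ, by rwa [dist_comm, dist_eq_norm, sub_neg_eq_add, add_comm]⟩
  exact (Complex.neg_ofReal_mem_slitPlane.1 hmem).not_ge hr

lemma EuclideanSpace.neg_sum_mul_le_norm_mul_sqrt (k : EuclideanSpace ℝ (Fin 3)) (a b c : ℝ) :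
    -(k 0 * a + k 1 * b + k 2 * c) ≤ ‖k‖ * √(a ^ 2 + b ^ 2 + c ^ 2) := by
  have hy : ‖!₂[a, b, c]‖ = √(a ^ 2 + b ^ 2 + c ^ 2) := by
    simp [EuclideanSpace.norm_eq, Fin.sum_univ_three]
  have h := (neg_le_abs _).trans (abs_real_inner_le_norm k (!₂[a, b, c]))
  simp only [hy, PiLp.inner_apply, Fin.sum_univ_three] at h
  simpa [mul_comm] using h

lemma integrable_one_add_norm_mul_exp_neg_mul_norm {E : Type*} [NormedAddCommGroup E]
    [NormedSpace ℝ E] [FiniteDimensional ℝ E] [Nontrivial E] [MeasurableSpace E] [BorelSpace E]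
    (μ : Measure E) [μ.IsAddHaarMeasure] {b : ℝ} (hb : 0 < b) :
    Integrable (fun x : E => (1 + ‖x‖) * Real.exp (-b * ‖x‖)) μ := by
  rw [integrable_fun_norm_addHaar μ (f := fun y => (1 + y) * Real.exp (-b * y))]
  set n := Module.finrank ℝ E - 1
  have hn (m : ℕ) : (-1 : ℝ) < m := by linarith [(Nat.cast_nonneg m : (0:ℝ) ≤ m)]
  refine ((integrableOn_rpow_mul_exp_neg_mul_rpow (hn n) one_pos hb).add
    (integrableOn_rpow_mul_exp_neg_mul_rpow (hn (n + 1)) one_pos hb)).congr_fun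
    (fun y _ => ?_) measurableSet_Ioi
  simp only [Pi.add_apply, Real.rpow_one, Real.rpow_natCast, smul_eq_mul, pow_succ]
  ring

lemma Esqrt_sq (ζ : ℂ) (k : EuclideanSpace ℝ (Fin 3)) : Esqrt ζ k ^ 2 = (‖k‖ ^ 2 : ℝ) + ζ := by
  rw [Esqrt, one_div]; exact Complex.cpow_ofNat_inv_pow _ 2

lemma re_Esqrt_nonneg (ζ : ℂ) (k : EuclideanSpace ℝ (Fin 3)) : 0 ≤ (Esqrt ζ k).re := by
  rw [Esqrt, one_div, Complex.cpow_inv_two_re]; exact Real.sqrt_nonneg _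

lemma norm_Esqrt_sub_norm_le (ζ : ℂ) (k : EuclideanSpace ℝ (Fin 3)) :
    ‖Esqrt ζ k - ‖k‖‖ ≤ √‖ζ‖ := by
  apply Real.le_sqrt_of_sq_le
  calc ‖Esqrt ζ k - ‖k‖‖ ^ 2 ≤ ‖Esqrt ζ k ^ 2 - (‖k‖ : ℂ) ^ 2‖ :=
        Complex.norm_sub_ofReal_sq_le (re_Esqrt_nonneg ζ k) (norm_nonneg k)
    _ = ‖ζ‖ := by rw [Esqrt_sq]; push_cast; ring_nf

lemma norm_Esqrt_sq (ζ : ℂ) (k : EuclideanSpace ℝ (Fin 3)) :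
    ‖Esqrt ζ k‖ ^ 2 = ‖(‖k‖ ^ 2 : ℝ) + ζ‖ := by
  rw [← norm_pow, Esqrt_sq]

lemma sqrt_le_norm_Esqrt {ζ : ℂ} {k : EuclideanSpace ℝ (Fin 3)} {δ : ℝ}
    (hδ : δ ≤ ‖(‖k‖ ^ 2 : ℝ) + ζ‖) : √δ ≤ ‖Esqrt ζ k‖ :=
  Real.sqrt_le_iff.2 ⟨norm_nonneg _, by rwa [norm_Esqrt_sq]⟩

lemma Esqrt_ne_zero {ζ : ℂ} (hζ : ζ ∈ slitPlane) (k : EuclideanSpace ℝ (Fin 3)) :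
    Esqrt ζ k ≠ 0 := fun h =>
  Complex.slitPlane_ne_zero (Complex.ofReal_add_mem_slitPlane hζ (sq_nonneg ‖k‖))
    (by rw [← Esqrt_sq, h, zero_pow two_ne_zero])

lemma continuousAt_Esqrt {p : ℂ × EuclideanSpace ℝ (Fin 3)} (hp : p.1 ∈ slitPlane) :
    ContinuousAt (fun q : ℂ × EuclideanSpace ℝ (Fin 3) => Esqrt q.1 q.2) p :=
  (continuousAt_cpow_const (Complex.ofReal_add_mem_slitPlane hp (sq_nonneg ‖p.2‖))).comp
    (f := fun q : ℂ × EuclideanSpace ℝ (Fin 3) => ((‖q.2‖ ^ 2 : ℝ) : ℂ) + q.1) (by fun_prop)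

noncomputable def tubeMargin (z : Fin 4 → ℂ) : ℝ :=
  -(z 0).im - √((z 1).im ^ 2 + (z 2).im ^ 2 + (z 3).im ^ 2)

lemma mem_forwardTube_iff {z : Fin 4 → ℂ} : z ∈ ForwardTube ↔ 0 < tubeMargin z := by
  rw [ForwardTube, mem_ofPred_eq, tubeMargin, sub_pos]

lemma continuous_tubeMargin : Continuous tubeMargin := by
  unfold tubeMargin; fun_prop

lemma isOpen_forwardTube : IsOpen ForwardTube := by
  rw [show ForwardTube = tubeMargin ⁻¹' Ioi 0 from ext fun _ => mem_forwardTube_iff]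
  exact isOpen_Ioi.preimage continuous_tubeMargin

noncomputable def WPhase (ζ : ℂ) (k : EuclideanSpace ℝ (Fin 3)) : (Fin 4 → ℂ) →L[ℂ] ℂ :=
  (-Complex.I * Esqrt ζ k) • ContinuousLinearMap.proj 0 +
    (Complex.I * (k 0 : ℂ)) • ContinuousLinearMap.proj 1 +
    (Complex.I * (k 1 : ℂ)) • ContinuousLinearMap.proj 2 +
    (Complex.I * (k 2 : ℂ)) • ContinuousLinearMap.proj 3

lemma WPhase_apply (ζ : ℂ) (k : EuclideanSpace ℝ (Fin 3)) (z : Fin 4 → ℂ) :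
    WPhase ζ k z = -Complex.I * Esqrt ζ k * z 0 +
      Complex.I * ((k 0 : ℂ) * z 1 + (k 1 : ℂ) * z 2 + (k 2 : ℂ) * z 3) := by
  simp [WPhase]
  ring

lemma WIntegrand_eq (ζ : ℂ) (z : Fin 4 → ℂ) (k : EuclideanSpace ℝ (Fin 3)) :
    WIntegrand ζ z k = (2 * Esqrt ζ k)⁻¹ * Complex.exp (WPhase ζ k z) := by
  rw [WIntegrand, WPhase_apply]

lemma hasFDerivAt_WIntegrand (ζ : ℂ) (z : Fin 4 → ℂ) (k : EuclideanSpace ℝ (Fin 3)) :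
    HasFDerivAt (WIntegrand ζ · k) (WIntegrand ζ z k • WPhase ζ k) z := by
  simp_rw [WIntegrand_eq, mul_smul]
  exact ((WPhase ζ k).hasFDerivAt.cexp).const_mul _

lemma re_WPhase_le (ζ : ℂ) (z : Fin 4 → ℂ) (k : EuclideanSpace ℝ (Fin 3)) :
    (WPhase ζ k z).re ≤ √‖ζ‖ * ‖z 0‖ - tubeMargin z * ‖k‖ := by
  have hshift : ((Esqrt ζ k - ‖k‖) * z 0).im ≤ √‖ζ‖ * ‖z 0‖ :=
    (Complex.im_le_norm _).trans (by rw [norm_mul]; gcongr; exact norm_Esqrt_sub_norm_le ζ k)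
  have hcs := EuclideanSpace.neg_sum_mul_le_norm_mul_sqrt k (z 1).im (z 2).im (z 3).im
  have hre : (WPhase ζ k z).re = ((Esqrt ζ k - ‖k‖) * z 0).im + ‖k‖ * (z 0).im
      - (k 0 * (z 1).im + k 1 * (z 2).im + k 2 * (z 3).im) := by
    simp [WPhase_apply, Complex.mul_re, Complex.mul_im]; ring
  rw [hre, tubeMargin]
  nlinarith

lemma norm_WIntegrand_le (ζ : ℂ) (z : Fin 4 → ℂ) (k : EuclideanSpace ℝ (Fin 3)) :
    ‖WIntegrand ζ z k‖ ≤
      (2 * ‖Esqrt ζ k‖)⁻¹ * Real.exp (√‖ζ‖ * ‖z 0‖ - tubeMargin z * ‖k‖) := by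
  rw [WIntegrand_eq, norm_mul, norm_inv, norm_mul, Complex.norm_two, Complex.norm_exp]
  gcongr
  exact re_WPhase_le ζ z k

lemma norm_WPhase_le (ζ : ℂ) (k : EuclideanSpace ℝ (Fin 3)) :
    ‖WPhase ζ k‖ ≤ √‖ζ‖ + 4 * ‖k‖ := by
  have hE : ‖Esqrt ζ k‖ ≤ √‖ζ‖ + ‖k‖ := by
    calc ‖Esqrt ζ k‖ ≤ ‖Esqrt ζ k - ‖k‖‖ + ‖(‖k‖ : ℂ)‖ := norm_le_norm_sub_add _ _
      _ ≤ √‖ζ‖ + ‖k‖ := by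
        rw [Complex.norm_real, norm_norm]; gcongr; exact norm_Esqrt_sub_norm_le ζ k
  have hk (j : Fin 3) : ‖(k j : ℂ)‖ ≤ ‖k‖ := by
    rw [Complex.norm_real]; exact PiLp.norm_apply_le k j
  refine ContinuousLinearMap.opNorm_le_bound _ (by positivity) fun z => ?_
  have hz (j : Fin 4) : ‖z j‖ ≤ ‖z‖ := norm_le_pi_norm z j
  rw [WPhase_apply]
  calc _ ≤ ‖Esqrt ζ k‖ * ‖z 0‖ +
        (‖(k 0 : ℂ)‖ * ‖z 1‖ + ‖(k 1 : ℂ)‖ * ‖z 2‖ + ‖(k 2 : ℂ)‖ * ‖z 3‖) := by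
        refine (norm_add_le _ _).trans (add_le_add (by simp) ?_)
        rw [norm_mul, Complex.norm_I, one_mul, ← norm_mul, ← norm_mul, ← norm_mul]
        exact norm_add₃_le
    _ ≤ (√‖ζ‖ + ‖k‖) * ‖z‖ + (‖k‖ * ‖z‖ + ‖k‖ * ‖z‖ + ‖k‖ * ‖z‖) := by
        gcongr <;> first | exact hE | exact hk _ | exact hz _
    _ = (√‖ζ‖ + 4 * ‖k‖) * ‖z‖ := by ring

lemma norm_WIntegrand_mul_one_add_norm_WPhase_le {ζ : ℂ} {z : Fin 4 → ℂ}
    {k : EuclideanSpace ℝ (Fin 3)} {δ M R b : ℝ} (hδ : δ ≤ ‖(‖k‖ ^ 2 : ℝ) + ζ‖) (hδ0 : 0 < δ)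
    (hM : ‖ζ‖ ≤ M) (hR : ‖z 0‖ ≤ R) (hb : b ≤ tubeMargin z) :
    ‖WIntegrand ζ z k‖ * (1 + ‖WPhase ζ k‖) ≤
      (2 * √δ)⁻¹ * Real.exp (√M * R) * (5 + √M) * ((1 + ‖k‖) * Real.exp (-b * ‖k‖)) := by
  have hζM : √‖ζ‖ ≤ √M := Real.sqrt_le_sqrt hM
  have hW : ‖WIntegrand ζ z k‖ ≤ (2 * √δ)⁻¹ * Real.exp (√M * R - b * ‖k‖) := by
    refine (norm_WIntegrand_le ζ z k).trans ?_
    have hE := sqrt_le_norm_Esqrt hδ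
    gcongr
  have hL : 1 + ‖WPhase ζ k‖ ≤ (5 + √M) * (1 + ‖k‖) := by
    nlinarith [norm_WPhase_le ζ k, norm_nonneg k, Real.sqrt_nonneg M]
  calc ‖WIntegrand ζ z k‖ * (1 + ‖WPhase ζ k‖)
      ≤ (2 * √δ)⁻¹ * Real.exp (√M * R - b * ‖k‖) * ((5 + √M) * (1 + ‖k‖)) := by
        gcongr
    _ = _ := by rw [sub_eq_add_neg, Real.exp_add, neg_mul]; ring

lemma continuousOn_WIntegrand (z : Fin 4 → ℂ) :
    ContinuousOn (fun q : ℂ × EuclideanSpace ℝ (Fin 3) => WIntegrand q.1 z q.2)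
      (slitPlane ×ˢ univ) := by
  rintro q ⟨hq, -⟩
  have hE := continuousAt_Esqrt hq
  have hne : 2 * Esqrt q.1 q.2 ≠ 0 := mul_ne_zero two_ne_zero (Esqrt_ne_zero hq q.2)
  unfold WIntegrand
  exact ((continuousAt_const.mul hE).inv₀ hne).mul (by fun_prop) |>.continuousWithinAt

lemma continuousOn_WPhase :
    ContinuousOn (fun q : ℂ × EuclideanSpace ℝ (Fin 3) => WPhase q.1 q.2)
      (slitPlane ×ˢ univ) := by
  rintro q ⟨hq, -⟩
  have hE := continuousAt_Esqrt hq
  unfold WPhase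
  exact ContinuousAt.continuousWithinAt (by fun_prop)

lemma integrable_WIntegrand {ζ : ℂ} (hζ : ζ ∈ slitPlane) {z : Fin 4 → ℂ}
    (hz : z ∈ ForwardTube) : Integrable (WIntegrand ζ z) := by
  obtain ⟨δ, hδ0, hδ⟩ :=
    isCompact_singleton.exists_pos_le_norm_ofReal_add (singleton_subset_iff.2 hζ)
  have hmeas : Continuous (WIntegrand ζ z) :=
    (continuousOn_WIntegrand z).comp_continuous (f := fun k => (ζ, k)) (by fun_prop)
      fun _ => ⟨hζ, mem_univ _⟩
  refine ((integrable_one_add_norm_mul_exp_neg_mul_norm volume (mem_forwardTube_iff.1 hz)).const_mul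
    ((2 * √δ)⁻¹ * Real.exp (√‖ζ‖ * ‖z 0‖) * (5 + √‖ζ‖))).mono' hmeas.aestronglyMeasurable
    (.of_forall fun k => ?_)
  exact (le_mul_of_one_le_right (norm_nonneg _) (le_add_of_nonneg_right (norm_nonneg _))).trans
    (norm_WIntegrand_mul_one_add_norm_WPhase_le (hδ ζ rfl _ (sq_nonneg _)) hδ0 le_rfl le_rfl
      le_rfl)

lemma MeasureTheory.ae_mem_prod_univ {α β : Type*} [MeasurableSpace α] [MeasurableSpace β]
    {μ : Measure α} {ν : Measure β} [SFinite μ] [SFinite ν] {s : Set α} (hs : MeasurableSet s) :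
    ∀ᵐ p ∂(μ.restrict s).prod ν, p ∈ s ×ˢ univ := by
  rw [Measure.restrict_prod_eq_prod_univ]
  exact ae_restrict_mem (hs.prod .univ)

lemma mul_Wpole_eq (a ζ : ℂ) (z : Fin 4 → ℂ) :
    a * Wpole ζ z = ((2 * Real.pi : ℝ) : ℂ)⁻¹ ^ 3 * ∫ k, a * WIntegrand ζ z k := by
  rw [Wpole, integral_const_mul]; ring

section Smearing

variable {s : Set ℝ} {γ c : ℝ → ℂ}

lemma aestronglyMeasurable_of_continuousOn_prod_univ {X : Type*} [TopologicalSpace X]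
    [TopologicalSpace.PseudoMetrizableSpace X] (hs : MeasurableSet s)
    {f : ℝ × EuclideanSpace ℝ (Fin 3) → X} (hf : ContinuousOn f (s ×ˢ univ)) :
    AEStronglyMeasurable f ((volume.restrict s).prod volume) := by
  rw [Measure.restrict_prod_eq_prod_univ]
  exact hf.aestronglyMeasurable (hs.prod .univ)

noncomputable def smearedWIntegrand (c γ : ℝ → ℂ) (z : Fin 4 → ℂ)
    (p : ℝ × EuclideanSpace ℝ (Fin 3)) : ℂ :=
  c p.1 * WIntegrand (γ p.1) z p.2

lemma hasFDerivAt_smearedWIntegrand (z : Fin 4 → ℂ) (p : ℝ × EuclideanSpace ℝ (Fin 3)) :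
    HasFDerivAt (smearedWIntegrand c γ · p)
      (smearedWIntegrand c γ z p • WPhase (γ p.1) p.2) z := by
  simpa only [smearedWIntegrand, mul_smul] using
    (hasFDerivAt_WIntegrand (γ p.1) z p.2).const_mul (c p.1)

lemma continuousOn_smearedWIntegrand (hγ : ContinuousOn γ s) (hγs : MapsTo γ s slitPlane)
    (hc : ContinuousOn c s) (z : Fin 4 → ℂ) :
    ContinuousOn (smearedWIntegrand c γ z) (s ×ˢ univ) := by
  have hW := (continuousOn_WIntegrand z).comp (hγ.prodMap (continuousOn_id (s := univ)))
    (hγs.prodMap (mapsTo_univ _ univ))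
  exact (hc.comp continuousOn_fst fun _ hp => hp.1).mul hW

lemma continuousOn_smearedWIntegrand_smul_WPhase (hγ : ContinuousOn γ s)
    (hγs : MapsTo γ s slitPlane) (hc : ContinuousOn c s) (z : Fin 4 → ℂ) :
    ContinuousOn (fun p => smearedWIntegrand c γ z p • WPhase (γ p.1) p.2) (s ×ˢ univ) := by
  have hL := continuousOn_WPhase.comp (hγ.prodMap (continuousOn_id (s := univ)))
    (hγs.prodMap (mapsTo_univ _ univ))
  exact (continuousOn_smearedWIntegrand hγ hγs hc z).smul hL

lemma exists_integrable_bound_smearedWIntegrand (hs : IsCompact s) (hγ : ContinuousOn γ s)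
    (hγs : MapsTo γ s slitPlane) (hc : ContinuousOn c s) {z₀ : Fin 4 → ℂ}
    (hz₀ : z₀ ∈ ForwardTube) :
    ∃ U ∈ 𝓝 z₀, ∃ bound : ℝ × EuclideanSpace ℝ (Fin 3) → ℝ,
      Integrable bound ((volume.restrict s).prod volume) ∧
      ∀ᵐ p ∂(volume.restrict s).prod volume, ∀ z ∈ U,
        ‖smearedWIntegrand c γ z p‖ * (1 + ‖WPhase (γ p.1) p.2‖) ≤ bound p := by
  obtain ⟨Kc, hKc⟩ := hs.exists_bound_of_continuousOn hc
  obtain ⟨M, hM⟩ := hs.exists_bound_of_continuousOn hγ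
  obtain ⟨δ, hδ0, hδ⟩ :=
    (hs.image_of_continuousOn hγ).exists_pos_le_norm_ofReal_add hγs.image_subset
  have hb : 0 < tubeMargin z₀ / 2 := half_pos (mem_forwardTube_iff.1 hz₀)
  have hU : {z : Fin 4 → ℂ | tubeMargin z₀ / 2 < tubeMargin z ∧ ‖z 0‖ < ‖z₀ 0‖ + 1} ∈ 𝓝 z₀ :=
    ((isOpen_lt continuous_const continuous_tubeMargin).inter
      (isOpen_lt (f := fun z : Fin 4 → ℂ => ‖z 0‖) (by fun_prop) continuous_const)).mem_nhds
      ⟨half_lt_self (mem_forwardTube_iff.1 hz₀), lt_add_one ‖z₀ 0‖⟩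
  have := isFiniteMeasure_restrict.2 (hs.measure_lt_top (μ := volume)).ne
  refine ⟨_, hU, _, ((integrable_one_add_norm_mul_exp_neg_mul_norm
    (volume : Measure (EuclideanSpace ℝ (Fin 3))) hb).comp_snd _).const_mul
      (Kc * ((2 * √δ)⁻¹ * Real.exp (√M * (‖z₀ 0‖ + 1)) * (5 + √M))), ?_⟩
  filter_upwards [ae_mem_prod_univ hs.measurableSet] with p ⟨ht, _⟩ z ⟨hbz, hRz⟩
  rw [smearedWIntegrand, norm_mul, mul_assoc, mul_assoc]
  exact mul_le_mul (hKc p.1 ht)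
    (norm_WIntegrand_mul_one_add_norm_WPhase_le (hδ _ (mem_image_of_mem γ ht) _ (sq_nonneg _))
      hδ0 (hM p.1 ht) hRz.le hbz.le)
    (by positivity) ((norm_nonneg _).trans (hKc p.1 ht))

lemma integrable_smearedWIntegrand (hs : IsCompact s) (hγ : ContinuousOn γ s)
    (hγs : MapsTo γ s slitPlane) (hc : ContinuousOn c s) {z : Fin 4 → ℂ}
    (hz : z ∈ ForwardTube) :
    Integrable (smearedWIntegrand c γ z) ((volume.restrict s).prod volume) := by
  obtain ⟨U, hU, bound, hbound, hle⟩ :=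
    exists_integrable_bound_smearedWIntegrand hs hγ hγs hc hz
  refine hbound.mono' (aestronglyMeasurable_of_continuousOn_prod_univ hs.measurableSet
    (continuousOn_smearedWIntegrand hγ hγs hc z)) ?_
  filter_upwards [hle] with p hp
  exact (le_mul_of_one_le_right (norm_nonneg _) (le_add_of_nonneg_right (norm_nonneg _))).trans
    (hp z (mem_of_mem_nhds hU))

lemma hasFDerivAt_integral_smearedWIntegrand (hs : IsCompact s) (hγ : ContinuousOn γ s)
    (hγs : MapsTo γ s slitPlane) (hc : ContinuousOn c s) {z₀ : Fin 4 → ℂ}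
    (hz₀ : z₀ ∈ ForwardTube) :
    HasFDerivAt (fun z => ∫ p, smearedWIntegrand c γ z p ∂(volume.restrict s).prod volume)
      (∫ p, smearedWIntegrand c γ z₀ p • WPhase (γ p.1) p.2 ∂(volume.restrict s).prod volume)
      z₀ := by
  obtain ⟨U, hU, bound, hbound, hle⟩ :=
    exists_integrable_bound_smearedWIntegrand hs hγ hγs hc hz₀
  have hF'_le : ∀ᵐ p ∂(volume.restrict s).prod volume, ∀ z ∈ U,
      ‖smearedWIntegrand c γ z p • WPhase (γ p.1) p.2‖ ≤ bound p := by
    filter_upwards [hle] with p hp z hz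
    calc _ = ‖smearedWIntegrand c γ z p‖ * ‖WPhase (γ p.1) p.2‖ := norm_smul _ _
      _ ≤ ‖smearedWIntegrand c γ z p‖ * (1 + ‖WPhase (γ p.1) p.2‖) := by gcongr; linarith
      _ ≤ bound p := hp z hz
  exact hasFDerivAt_integral_of_dominated_of_fderiv_le
    (F := smearedWIntegrand c γ)
    (F' := fun z p => smearedWIntegrand c γ z p • WPhase (γ p.1) p.2) hU
    (.of_forall fun z => aestronglyMeasurable_of_continuousOn_prod_univ hs.measurableSet
      (continuousOn_smearedWIntegrand hγ hγs hc z))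
    (integrable_smearedWIntegrand hs hγ hγs hc hz₀)
    (aestronglyMeasurable_of_continuousOn_prod_univ hs.measurableSet
      (continuousOn_smearedWIntegrand_smul_WPhase hγ hγs hc z₀))
    hF'_le hbound (.of_forall fun p z _ => hasFDerivAt_smearedWIntegrand z p)

lemma integrableOn_mul_Wpole (hs : IsCompact s) (hγ : ContinuousOn γ s)
    (hγs : MapsTo γ s slitPlane) (hc : ContinuousOn c s) {z : Fin 4 → ℂ}
    (hz : z ∈ ForwardTube) : IntegrableOn (fun t => c t * Wpole (γ t) z) s := by
  simp_rw [mul_Wpole_eq]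
  exact (integrable_smearedWIntegrand hs hγ hγs hc hz).integral_prod_left.const_mul _

lemma setIntegral_mul_Wpole_eq (hs : IsCompact s) (hγ : ContinuousOn γ s)
    (hγs : MapsTo γ s slitPlane) (hc : ContinuousOn c s) {z : Fin 4 → ℂ}
    (hz : z ∈ ForwardTube) :
    ∫ t in s, c t * Wpole (γ t) z = ((2 * Real.pi : ℝ) : ℂ)⁻¹ ^ 3 *
      ∫ p, smearedWIntegrand c γ z p ∂(volume.restrict s).prod volume := by
  simp_rw [mul_Wpole_eq]
  rw [integral_const_mul, integral_prod _ (integrable_smearedWIntegrand hs hγ hγs hc hz)]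
  rfl

lemma differentiableAt_setIntegral_mul_Wpole (hs : IsCompact s) (hγ : ContinuousOn γ s)
    (hγs : MapsTo γ s slitPlane) (hc : ContinuousOn c s) {z₀ : Fin 4 → ℂ}
    (hz₀ : z₀ ∈ ForwardTube) :
    DifferentiableAt ℂ (fun z => ∫ t in s, c t * Wpole (γ t) z) z₀ := by
  refine ((hasFDerivAt_integral_smearedWIntegrand hs hγ hγs hc hz₀).differentiableAt.const_mul
    (((2 * Real.pi : ℝ) : ℂ)⁻¹ ^ 3)).congr_of_eventuallyEq ?_
  filter_upwards [isOpen_forwardTube.mem_nhds hz₀] with z hz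
  exact setIntegral_mul_Wpole_eq hs hγ hγs hc hz

end Smearing

/-- Let `γ : [0,1] → ℂ` be continuously differentiable with image disjoint
from `(−∞,0]` and let `D : ℂ → ℂ` be continuous. Then for every `z` in the forward tube the
integral defining `W_{γ(t)}(z)` converges absolutely for each `t ∈ [0,1]`, the contour
integrand `t ↦ D(γ(t)) γ′(t) W_{γ(t)}(z)` is integrable on `[0,1]`, and
`F(z) = ∫₀¹ D(γ(t)) γ′(t) W_{γ(t)}(z) dt` is holomorphic at every point of the tube. -/
theorem contour_smeared_wightman_holomorphic (γ γ' : ℝ → ℂ)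
    (hγ : ∀ t ∈ Set.Icc (0 : ℝ) 1, HasDerivAt γ (γ' t) t)
    (hγ' : ContinuousOn γ' (Set.Icc (0 : ℝ) 1))
    (him : ∀ t ∈ Set.Icc (0 : ℝ) 1, ∀ x : ℝ, x ≤ 0 → γ t ≠ (x : ℂ))
    (D : ℂ → ℂ) (hD : Continuous D) :
    (∀ z ∈ ForwardTube, ∀ t ∈ Set.Icc (0 : ℝ) 1, Integrable (WIntegrand (γ t) z)) ∧
    (∀ z ∈ ForwardTube,
      IntegrableOn (fun t : ℝ => D (γ t) * γ' t * Wpole (γ t) z) (Set.Icc (0 : ℝ) 1)) ∧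
    (∀ z ∈ ForwardTube,
      DifferentiableAt ℂ
        (fun z : Fin 4 → ℂ => ∫ t in Set.Icc (0 : ℝ) 1, D (γ t) * γ' t * Wpole (γ t) z) z) := by
  have hγc : ContinuousOn γ (Icc 0 1) := fun t ht => (hγ t ht).continuousAt.continuousWithinAt
  have hγs : MapsTo γ (Icc 0 1) slitPlane := fun t ht =>
    Complex.mem_slitPlane_of_forall_ne_ofReal (him t ht)
  have hc : ContinuousOn (fun t => D (γ t) * γ' t) (Icc 0 1) := (hD.comp_continuousOn hγc).mul hγ'
  exact ⟨fun z hz t ht => integrable_WIntegrand (hγs ht) hz,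
    fun z hz => integrableOn_mul_Wpole isCompact_Icc hγc hγs hc hz,
    fun z hz => differentiableAt_setIntegral_mul_Wpole isCompact_Icc hγc hγs hc hz⟩
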